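/- Fix κ ≥ 0. Then B(0) = E(κ)², and as q → 1 from below, B(q) converges to C_κ = ∫_ℝ max(κ - z, 0)² φ(z) dz; moreover C_κ = (κ² + 1)·Φ(κ) + κ·φ(κ). -/

import Mathlib

open MeasureTheory Real Filter

/-- The standard normal density. -/
noncomputable def gphi (u : ℝ) : ℝ := Real.exp (-u ^ 2 / 2) / Real.sqrt (2 * Real.pi)

/-- The standard normal CDF. -/
noncomputable def gPhi (u : ℝ) : ℝ := ∫ s in Set.Iic u, gphi s

/-- The standard normal tail. -/
noncomputable def gPhiBar (u : ℝ) : ℝ := 1 - gPhi u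

/-- The inverse Mills ratio. -/
noncomputable def mills (u : ℝ) : ℝ := gphi u / gPhiBar u

/-- P(r) = E[tanh²(√r Z)]. -/
noncomputable def Pfun (r : ℝ) : ℝ := ∫ z : ℝ, Real.tanh (Real.sqrt r * z) ^ 2 * gphi z

/-- B(q). -/
noncomputable def Bfun (κ q : ℝ) : ℝ :=
  (1 - q) * ∫ z : ℝ, mills ((κ - Real.sqrt q * z) / Real.sqrt (1 - q)) ^ 2 * gphi z

/-- C_κ. -/
noncomputable def Ckappa (κ : ℝ) : ℝ := ∫ z : ℝ, max (κ - z) 0 ^ 2 * gphi z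

/-- The critical capacity. -/
noncomputable def alphac (κ : ℝ) : ℝ := 2 / (Real.pi * Ckappa κ)

/-! For `s > 0` the scaled inverse Mills ratio satisfies `max a 0 ≤ s E(a / s) ≤ max a 0 + 4 s`:
the lower bound is `E(u) ≥ u`, from `∫_u^∞ t φ(t) dt = φ(u)`, and the upper one combines Gordon's
inequality `E(u) ≤ u + 1/u` with `E ≤ 2 √e ≤ 4` on `(-∞, 1]`. With `s = √(1 - q)` and
`a = κ - √q z`, the integrand of `B(q)` is `(s E(a / s))² φ(z)`; it therefore converges to
`max (κ - z) 0 ² φ(z)` as `q → 1⁻` and is dominated by `(|κ| + 4 + |z|)² φ(z)`, so dominated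
convergence gives the limit. Finally `(κ² + 1) Φ(z) + (2κ - z) φ(z)` is an antiderivative of
`(κ - z)² φ(z)` vanishing at `-∞`, which evaluates `C_κ`. -/
open Set Topology

lemma gphi_eq (u : ℝ) : gphi u = exp (-(1 / 2) * u ^ 2) * (√(2 * π))⁻¹ := by
  rw [gphi, div_eq_mul_inv]; ring_nf

lemma gphi_pos (u : ℝ) : 0 < gphi u := by
  unfold gphi; positivity

lemma gphi_le_gphi_zero (u : ℝ) : gphi u ≤ gphi 0 := by
  unfold gphi
  exact div_le_div_of_nonneg_right (exp_le_exp.2 (by nlinarith [sq_nonneg u])) (sqrt_nonneg _)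

@[fun_prop]
lemma continuous_gphi : Continuous gphi := by
  unfold gphi; fun_prop

lemma hasDerivAt_gphi (u : ℝ) : HasDerivAt gphi (-(u * gphi u)) u := by
  have h := ((((hasDerivAt_pow 2 u).fun_neg).div_const 2).exp).div_const √(2 * π)
  exact h.congr_deriv (by rw [gphi]; push_cast; ring)

lemma integrable_pow_mul_gphi (n : ℕ) : Integrable fun z => z ^ n * gphi z := by
  have h := (integrable_rpow_mul_exp_neg_mul_sq (by norm_num : (0:ℝ) < 1 / 2)
    (by linarith [n.cast_nonneg (α := ℝ)] : (-1:ℝ) < n)).mul_const (√(2 * π))⁻¹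
  simpa only [rpow_natCast, mul_assoc, ← gphi_eq] using h

lemma integrable_gphi : Integrable gphi := by
  simpa using integrable_pow_mul_gphi 0

lemma integral_gphi : ∫ z, gphi z = 1 := by
  simp only [gphi_eq, integral_mul_const, integral_gaussian]
  rw [show π / (1 / 2) = 2 * π by ring, mul_inv_cancel₀ (by positivity)]

lemma tendsto_pow_mul_gphi_cocompact (n : ℕ) :
    Tendsto (fun t => t ^ n * gphi t) (cocompact ℝ) (𝓝 0) := by
  have h := (tendsto_rpow_abs_mul_exp_neg_mul_sq_cocompact (by norm_num : (0:ℝ) < 1 / 2)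
    n).mul_const (√(2 * π))⁻¹
  rw [zero_mul] at h
  refine tendsto_zero_iff_norm_tendsto_zero.2 (h.congr fun t => ?_)
  rw [norm_mul, norm_pow, Real.norm_eq_abs, Real.norm_of_nonneg (gphi_pos t).le, gphi_eq,
    rpow_natCast, mul_assoc]

lemma hasDerivAt_gPhi (u : ℝ) : HasDerivAt gPhi (gphi u) u := by
  have h : gPhi = fun x => gPhi 0 + ∫ t in (0:ℝ)..x, gphi t := by
    ext x
    rw [gPhi, gPhi, intervalIntegral.integral_Iic_sub_Iic integrable_gphi.integrableOn
      integrable_gphi.integrableOn |>.symm]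
    ring
  rw [h]
  exact (intervalIntegral.integral_hasDerivAt_right integrable_gphi.intervalIntegrable
    (continuous_gphi.stronglyMeasurableAtFilter _ _) continuous_gphi.continuousAt).const_add _

lemma continuous_gPhi : Continuous gPhi :=
  continuous_iff_continuousAt.2 fun u => (hasDerivAt_gPhi u).continuousAt

lemma monotone_gPhi : Monotone gPhi :=
  monotone_of_hasDerivAt_nonneg hasDerivAt_gPhi fun u => (gphi_pos u).le

lemma tendsto_gPhi_atBot : Tendsto gPhi atBot (𝓝 0) :=
  tendsto_integral_Iic_zero tendsto_id

lemma gPhiBar_eq_integral_Ioi (u : ℝ) : gPhiBar u = ∫ t in Ioi u, gphi t := by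
  rw [gPhiBar, gPhi, ← integral_gphi, ← intervalIntegral.integral_Iic_add_Ioi
    integrable_gphi.integrableOn integrable_gphi.integrableOn]
  ring

lemma gPhiBar_pos (u : ℝ) : 0 < gPhiBar u := by
  rw [gPhiBar_eq_integral_Ioi, setIntegral_pos_iff_support_of_nonneg_ae
    (.of_forall fun t => (gphi_pos t).le) integrable_gphi.integrableOn,
    Function.support_eq_univ fun t => (gphi_pos t).ne', univ_inter]
  simp

lemma antitone_gPhiBar : Antitone gPhiBar :=
  fun _ _ h => sub_le_sub_left (monotone_gPhi h) 1

lemma integral_Ioi_mul_gphi (u : ℝ) : ∫ t in Ioi u, t * gphi t = gphi u := by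
  have h := integral_Ioi_of_hasDerivAt_of_tendsto' (a := u) (m := 0)
    (f := fun t => -gphi t) (fun t _ => (hasDerivAt_gphi t).neg)
    (by simpa using (integrable_pow_mul_gphi 1).integrableOn)
    (by simpa using ((tendsto_pow_mul_gphi_cocompact 0).mono_left atTop_le_cocompact).neg)
  simpa using h

lemma mills_nonneg (u : ℝ) : 0 ≤ mills u :=
  div_nonneg (gphi_pos u).le (gPhiBar_pos u).le

@[fun_prop]
lemma continuous_mills : Continuous mills :=
  continuous_gphi.div (continuous_const.sub continuous_gPhi) fun u => (gPhiBar_pos u).ne'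

lemma gPhiBar_le_gphi_div (u : ℝ) (hu : 0 < u) : gPhiBar u ≤ gphi u / u := by
  rw [gPhiBar_eq_integral_Ioi, le_div_iff₀ hu, ← integral_mul_const, ← integral_Ioi_mul_gphi]
  refine setIntegral_mono_on (integrable_gphi.integrableOn.mul_const u)
    (by simpa using (integrable_pow_mul_gphi 1).integrableOn) measurableSet_Ioi fun t ht => ?_
  rw [mul_comm]
  exact mul_le_mul_of_nonneg_right (le_of_lt ht) (gphi_pos t).le

lemma le_mills (u : ℝ) (hu : 0 < u) : u ≤ mills u := by
  rw [mills, le_div_iff₀ (gPhiBar_pos u)]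
  calc u * gPhiBar u ≤ u * (gphi u / u) :=
        mul_le_mul_of_nonneg_left (gPhiBar_le_gphi_div u hu) hu.le
    _ = gphi u := mul_div_cancel₀ _ hu.ne'

lemma max_le_mills (u : ℝ) : max u 0 ≤ mills u :=
  max_le_iff.2 ⟨(le_or_gt u 0).elim (fun h => h.trans (mills_nonneg u)) (le_mills u),
    mills_nonneg u⟩

/-- Gordon's inequality: `-t φ(t) / (t² + 1)` is an antiderivative of
`φ(t) (1 - 2 / (t² + 1)²) ≤ φ(t)` vanishing at `+∞`. -/
lemma gphi_mul_div_le_gPhiBar (u : ℝ) : u * gphi u / (u ^ 2 + 1) ≤ gPhiBar u := by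
  set f' : ℝ → ℝ := fun t => gphi t * (1 - 2 / (t ^ 2 + 1) ^ 2)
  have hderiv (t : ℝ) : HasDerivAt (fun t => -(t * gphi t / (t ^ 2 + 1))) (f' t) t := by
    have h := (((hasDerivAt_id' t).fun_mul (hasDerivAt_gphi t)).fun_div
      ((hasDerivAt_pow 2 t).add_const 1) (by positivity)).fun_neg
    exact h.congr_deriv (by simp only [f']; field_simp; ring)
  have hf'_abs (t : ℝ) : |f' t| ≤ gphi t := by
    have h : 2 / (t ^ 2 + 1) ^ 2 ≤ 2 :=
      div_le_self zero_le_two (one_le_pow₀ (by nlinarith [sq_nonneg t]))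
    have h' : 0 < 2 / (t ^ 2 + 1) ^ 2 := by positivity
    rw [abs_mul, abs_of_pos (gphi_pos t)]
    exact mul_le_of_le_one_right (gphi_pos t).le (abs_le.2 ⟨by linarith, by linarith⟩)
  have hf'_int : IntegrableOn f' (Ioi u) := by
    refine (integrable_gphi.mono' ?_ (.of_forall hf'_abs)).integrableOn
    exact (continuous_gphi.mul (continuous_const.sub (continuous_const.div (by fun_prop)
      fun t => by positivity))).aestronglyMeasurable
  have htop : Tendsto (fun t => -(t * gphi t / (t ^ 2 + 1))) atTop (𝓝 0) := by
    have h := ((tendsto_pow_mul_gphi_cocompact 1).mono_left atTop_le_cocompact).mul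
      (tendsto_inv_atTop_zero.comp (tendsto_atTop_add_const_right _ 1
        (tendsto_pow_atTop two_ne_zero)))
    simpa [div_eq_mul_inv] using h.neg
  calc u * gphi u / (u ^ 2 + 1) = ∫ t in Ioi u, f' t := by
        rw [integral_Ioi_of_hasDerivAt_of_tendsto' (fun t _ => hderiv t) hf'_int htop]; ring
    _ ≤ ∫ t in Ioi u, gphi t := setIntegral_mono_on hf'_int integrable_gphi.integrableOn
        measurableSet_Ioi fun t _ => (le_abs_self _).trans (hf'_abs t)
    _ = gPhiBar u := (gPhiBar_eq_integral_Ioi u).symm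

lemma mills_le_add_inv (u : ℝ) (hu : 0 < u) : mills u ≤ u + u⁻¹ := by
  have h := gphi_mul_div_le_gPhiBar u
  have hpos : 0 < u * gphi u / (u ^ 2 + 1) := by have := gphi_pos u; positivity
  calc mills u ≤ gphi u / (u * gphi u / (u ^ 2 + 1)) :=
        div_le_div_of_nonneg_left (gphi_pos u).le hpos h
    _ = u + u⁻¹ := by have := (gphi_pos u).ne'; field_simp

lemma mills_le_of_le_one (u : ℝ) (hu : u ≤ 1) : mills u ≤ 4 := by
  have hbar : gphi 1 / 2 ≤ gPhiBar u := by
    have h := (gphi_mul_div_le_gPhiBar 1).trans (antitone_gPhiBar hu)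
    norm_num at h
    exact h
  have hratio : gphi 0 / gphi 1 ≤ 2 := by
    have hsq : exp (1 / 2) ^ 2 = exp 1 := by rw [← exp_nat_mul]; norm_num
    have heq : gphi 0 / gphi 1 = exp (1 / 2) := by
      rw [gphi, gphi, div_div_div_cancel_right₀ (sqrt_pos.2 (by positivity)).ne', ← exp_sub]
      norm_num
    rw [heq]
    nlinarith [exp_one_lt_d9, exp_pos (1 / 2)]
  calc mills u ≤ gphi 0 / (gphi 1 / 2) :=
        div_le_div₀ (gphi_pos 0).le (gphi_le_gphi_zero u) (by have := gphi_pos 1; positivity) hbar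
    _ = 2 * (gphi 0 / gphi 1) := by ring
    _ ≤ 4 := by linarith

lemma mills_le_max_add (u : ℝ) : mills u ≤ max u 0 + 4 := by
  rcases le_or_gt u 1 with hu | hu
  · linarith [mills_le_of_le_one u hu, le_max_right u 0]
  · have := mills_le_add_inv u (by linarith)
    have := inv_le_one_of_one_le₀ hu.le
    linarith [le_max_left u 0]

section ScaledMills

variable (a : ℝ) {s : ℝ}

lemma max_le_mul_mills_div (hs : 0 < s) : max a 0 ≤ s * mills (a / s) := by
  calc max a 0 = s * max (a / s) 0 := by
        rw [mul_max_of_nonneg _ _ hs.le, mul_div_cancel₀ _ hs.ne', mul_zero]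
    _ ≤ s * mills (a / s) := mul_le_mul_of_nonneg_left (max_le_mills _) hs.le

lemma mul_mills_div_le (hs : 0 < s) : s * mills (a / s) ≤ max a 0 + 4 * s := by
  calc s * mills (a / s) ≤ s * (max (a / s) 0 + 4) :=
        mul_le_mul_of_nonneg_left (mills_le_max_add _) hs.le
    _ = max a 0 + 4 * s := by
        rw [mul_add, mul_max_of_nonneg _ _ hs.le, mul_div_cancel₀ _ hs.ne', mul_zero]; ring

end ScaledMills

lemma tendsto_mul_mills_div {ι : Type*} {l : Filter ι} {a s : ι → ℝ} {x : ℝ}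
    (ha : Tendsto a l (𝓝 x)) (hs : Tendsto s l (𝓝[>] 0)) :
    Tendsto (fun i => s i * mills (a i / s i)) l (𝓝 (max x 0)) := by
  obtain ⟨hs0, hs_pos⟩ := tendsto_nhdsWithin_iff.1 hs
  have hmax : Tendsto (fun i => max (a i) 0) l (𝓝 (max x 0)) := ha.max tendsto_const_nhds
  have hupper := hmax.add (hs0.const_mul 4)
  rw [mul_zero, add_zero] at hupper
  exact tendsto_of_tendsto_of_tendsto_of_le_of_le' hmax hupper
    (hs_pos.mono fun i hi => max_le_mul_mills_div _ hi)
    (hs_pos.mono fun i hi => mul_mills_div_le _ hi)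

lemma Bfun_zero (κ : ℝ) : Bfun κ 0 = mills κ ^ 2 := by
  simp [Bfun, integral_const_mul, integral_gphi]

lemma Bfun_eq_integral (κ : ℝ) {q : ℝ} (hq : q ≤ 1) :
    Bfun κ q = ∫ z, (√(1 - q) * mills ((κ - √q * z) / √(1 - q))) ^ 2 * gphi z := by
  simp_rw [Bfun, mul_pow, sq_sqrt (sub_nonneg.2 hq), mul_assoc, integral_const_mul]

lemma integrable_add_abs_sq_mul_gphi (c : ℝ) : Integrable fun z => (c + |z|) ^ 2 * gphi z := by
  refine ((integrable_gphi.const_mul (2 * c ^ 2)).add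
    ((integrable_pow_mul_gphi 2).const_mul 2)).mono' (by fun_prop) (.of_forall fun z => ?_)
  have h : (c + |z|) ^ 2 ≤ 2 * c ^ 2 + 2 * z ^ 2 := by
    nlinarith [sq_nonneg (c - |z|), sq_abs z]
  rw [norm_of_nonneg (by have := gphi_pos z; positivity), Pi.add_apply]
  nlinarith [gphi_pos z]

lemma sqrt_mul_mills_le (κ z : ℝ) {q : ℝ} (hq : q ∈ Ioo 0 1) :
    √(1 - q) * mills ((κ - √q * z) / √(1 - q)) ≤ |κ| + 4 + |z| := by
  have hs : 0 < √(1 - q) := sqrt_pos.2 (sub_pos.2 hq.2)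
  have hs1 : √(1 - q) ≤ 1 := sqrt_le_one.2 (by linarith [hq.1])
  have hsq : √q * |z| ≤ |z| := mul_le_of_le_one_left (abs_nonneg z) (sqrt_le_one.2 hq.2.le)
  have hmax : max (κ - √q * z) 0 ≤ |κ| + |z| := by
    refine max_le ((le_abs_self _).trans ?_) (by positivity)
    calc |κ - √q * z| ≤ |κ| + |√q * z| := abs_sub _ _
      _ ≤ |κ| + |z| := by rw [abs_mul, abs_of_nonneg (sqrt_nonneg q)]; linarith
  linarith [mul_mills_div_le (κ - √q * z) hs]

lemma tendsto_Bfun (κ : ℝ) : Tendsto (Bfun κ) (𝓝[<] 1) (𝓝 (Ckappa κ)) := by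
  have hq : ∀ᶠ q in 𝓝[<] (1 : ℝ), q ∈ Ioo 0 1 := Ioo_mem_nhdsLT zero_lt_one
  have hs : Tendsto (fun q => √(1 - q)) (𝓝[<] 1) (𝓝[>] 0) := by
    refine tendsto_nhdsWithin_iff.2 ⟨?_, hq.mono fun q hq => sqrt_pos.2 (sub_pos.2 hq.2)⟩
    have h : Continuous fun q : ℝ => √(1 - q) := by fun_prop
    simpa using (h.tendsto 1).mono_left nhdsWithin_le_nhds
  refine (tendsto_integral_filter_of_dominated_convergence
    (fun z => (|κ| + 4 + |z|) ^ 2 * gphi z) ?_ ?_ (integrable_add_abs_sq_mul_gphi _) ?_).congr'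
    (hq.mono fun q hq => (Bfun_eq_integral κ hq.2.le).symm)
  · exact .of_forall fun q => (by fun_prop : Continuous _).aestronglyMeasurable
  · filter_upwards [hq] with q hq
    refine .of_forall fun z => ?_
    have h := sqrt_mul_mills_le κ z hq
    have h0 := mul_nonneg (sqrt_nonneg (1 - q)) (mills_nonneg ((κ - √q * z) / √(1 - q)))
    rw [norm_of_nonneg (by have := gphi_pos z; positivity)]
    exact mul_le_mul_of_nonneg_right (pow_le_pow_left₀ h0 h 2) (gphi_pos z).le
  · refine .of_forall fun z => ?_
    have ha : Tendsto (fun q => κ - √q * z) (𝓝[<] 1) (𝓝 (κ - z)) := by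
      have h : Continuous fun q => κ - √q * z := by fun_prop
      simpa using (h.tendsto 1).mono_left nhdsWithin_le_nhds
    exact ((tendsto_mul_mills_div ha hs).pow 2).mul_const _

lemma Ckappa_eq_integral_Iic (κ : ℝ) : Ckappa κ = ∫ z in Iic κ, (κ - z) ^ 2 * gphi z := by
  rw [Ckappa, ← integral_indicator measurableSet_Iic]
  congr 1 with z
  rcases le_or_gt z κ with h | h
  · rw [indicator_of_mem (mem_Iic.2 h), max_eq_left (sub_nonneg.2 h)]
  · rw [indicator_of_notMem (notMem_Iic.2 h), max_eq_right (sub_neg.2 h).le]; ring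

lemma integral_Iic_sub_sq_mul_gphi (κ : ℝ) :
    ∫ z in Iic κ, (κ - z) ^ 2 * gphi z = (κ ^ 2 + 1) * gPhi κ + κ * gphi κ := by
  set G : ℝ → ℝ := fun z => (κ ^ 2 + 1) * gPhi z + (2 * κ - z) * gphi z
  have hderiv (z : ℝ) : HasDerivAt G ((κ - z) ^ 2 * gphi z) z :=
    (((hasDerivAt_gPhi z).const_mul _).add
      (((hasDerivAt_id' z).const_sub _).mul (hasDerivAt_gphi z))).congr_deriv (by ring)
  have hint : Integrable fun z => (κ - z) ^ 2 * gphi z := by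
    have h := (((integrable_pow_mul_gphi 0).const_mul (κ ^ 2)).sub
      ((integrable_pow_mul_gphi 1).const_mul (2 * κ))).add (integrable_pow_mul_gphi 2)
    exact h.congr (.of_forall fun z => by simp only [Pi.add_apply, Pi.sub_apply]; ring)
  have hbot : Tendsto G atBot (𝓝 0) := by
    have h0 := (tendsto_pow_mul_gphi_cocompact 0).mono_left atBot_le_cocompact
    have h1 := (tendsto_pow_mul_gphi_cocompact 1).mono_left atBot_le_cocompact
    have h := (tendsto_gPhi_atBot.const_mul (κ ^ 2 + 1)).add ((h0.const_mul (2 * κ)).sub h1)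
    simp only [pow_zero, pow_one, one_mul, mul_zero, sub_zero, add_zero] at h
    exact h.congr fun z => by simp only [G]; ring
  rw [integral_Iic_of_hasDerivAt_of_tendsto' (fun z _ => hderiv z) hint.integrableOn hbot]
  simp only [G]; ring

theorem stmt_8_general (κ : ℝ) :
    Bfun κ 0 = mills κ ^ 2 ∧
    Filter.Tendsto (Bfun κ) (nhdsWithin 1 (Set.Iio 1)) (nhds (Ckappa κ)) ∧
    Ckappa κ = (κ ^ 2 + 1) * gPhi κ + κ * gphi κ :=
  ⟨Bfun_zero κ, tendsto_Bfun κ, (Ckappa_eq_integral_Iic κ).trans (integral_Iic_sub_sq_mul_gphi κ)⟩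

theorem stmt_8 (κ : ℝ) (hκ : 0 ≤ κ) :
    Bfun κ 0 = mills κ ^ 2 ∧
    Filter.Tendsto (Bfun κ) (nhdsWithin 1 (Set.Iio 1)) (nhds (Ckappa κ)) ∧
    Ckappa κ = (κ ^ 2 + 1) * gPhi κ + κ * gphi κ :=
  stmt_8_general κ
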